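/- With M as in the scaling-case monotone function and Σ = v = √(3/2)γ/λ, the third derivative of M along the flow satisfies M'''|_{Σ=v} = -27(2-γ)[2v² - γ(1-Ω)]²·M|_{Σ=v}/(2v²) ≤ 0, with equality if and only if Ω = 1 - 3γ/λ² (the fixed point value). -/

import Mathlib

/-!
Along the flow, `M' = F M` with `F = φ(Σ)`, `φ(s) = -3(2-γ)(s-v)² / ((1-v²)(1-vs))`: this
identity is what makes `M` monotone. Since `φ` vanishes to second order at `v`, differentiating
`M' = F M` twice leaves only `M''' = F'' M = φ''(v) Σ'² M` at a point with `Σ = v`, where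
`φ''(v) = -6(2-γ)/(1-v²)²` and `Σ' = -3(1-v²)(2v² - γ(1-Ω))/(2v)`.
-/

open Filter Topology

noncomputable section

theorem hasDerivAt_sq_mul_rpow_mul_rpow {f g h : ℝ → ℝ} {f' g' h' p q x : ℝ}
    (hf : HasDerivAt f f' x) (hg : HasDerivAt g g' x) (hh : HasDerivAt h h' x)
    (hf0 : f x ≠ 0) (hg0 : g x ≠ 0) (hh0 : h x ≠ 0) :
    HasDerivAt (fun y => f y ^ 2 * g y ^ p * h y ^ q)
      ((2 * f' / f x + p * g' / g x + q * h' / h x) * (f x ^ 2 * g x ^ p * h x ^ q)) x := by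
  have := ((hf.fun_pow 2).fun_mul (hg.rpow_const (p := p) (Or.inl hg0))).fun_mul
    (hh.rpow_const (p := q) (Or.inl hh0))
  refine this.congr_deriv ?_
  rw [Real.rpow_sub_one hg0, Real.rpow_sub_one hh0]
  field_simp
  ring

theorem iterate_deriv_three_eq_of_hasDerivAt_mul {M F F' : ℝ → ℝ} {F'' N : ℝ}
    (hM : ∀ᶠ x in 𝓝 N, HasDerivAt M (F x * M x) x)
    (hF : ∀ᶠ x in 𝓝 N, HasDerivAt F (F' x) x) (hF' : HasDerivAt F' F'' N)
    (hF0 : F N = 0) (hF'0 : F' N = 0) :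
    deriv^[3] M N = F'' * M N := by
  have hM' : deriv M =ᶠ[𝓝 N] fun x => F x * M x := hM.mono fun x hx => hx.deriv
  have hFM : deriv (fun x => F x * M x) =ᶠ[𝓝 N] fun x => F' x * M x + F x * (F x * M x) :=
    (hM.and hF).mono fun x hx => (hx.2.mul hx.1).deriv
  have h3 := (hF'.fun_mul hM.self_of_nhds).fun_add
    (hF.self_of_nhds.fun_mul (hF.self_of_nhds.fun_mul hM.self_of_nhds))
  calc deriv^[3] M N = deriv (fun x => F' x * M x + F x * (F x * M x)) N :=
        (hM'.deriv.trans hFM).deriv_eq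
    _ = F'' * M N := by rw [h3.deriv, hF0, hF'0]; ring

theorem hasDerivAt_comp_mul_of_eq_zero {φ' S S' : ℝ → ℝ} {φ'' N : ℝ}
    (hφ' : HasDerivAt φ' φ'' (S N)) (hφ'0 : φ' (S N) = 0)
    (hS : HasDerivAt S (S' N) N) (hS' : DifferentiableAt ℝ S' N) :
    HasDerivAt (fun x => φ' (S x) * S' x) (φ'' * S' N ^ 2) N := by
  have := (hφ'.comp N hS).fun_mul hS'.hasDerivAt
  simpa only [Function.comp_apply, hφ'0, zero_mul, add_zero, mul_assoc, ← sq] using this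

theorem hasDerivAt_mul_sq_sub_div (k v s : ℝ) (hs : 1 - v * s ≠ 0) :
    HasDerivAt (fun s => k * (s - v) ^ 2 / (1 - v * s))
      (k * (s - v) * (2 - v * s - v ^ 2) / (1 - v * s) ^ 2) s := by
  have hs' := hasDerivAt_id' s
  have := (((hs'.sub_const v).fun_pow 2).const_mul k).fun_div ((hs'.const_mul v).const_sub 1) hs
  refine this.congr_deriv ?_
  ring

theorem hasDerivAt_mul_sub_mul_div (k v : ℝ) (hv : 1 - v ^ 2 ≠ 0) :
    HasDerivAt (fun s => k * (s - v) * (2 - v * s - v ^ 2) / (1 - v * s) ^ 2)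
      (2 * k / (1 - v ^ 2)) v := by
  have hv' : 1 - v * v ≠ 0 := by rwa [← sq]
  have hs := hasDerivAt_id' v
  have hnum :=
    ((hs.sub_const v).const_mul k).fun_mul ((hs.const_mul v).const_sub 2 |>.sub_const (v ^ 2))
  have := hnum.fun_div (((hs.const_mul v).const_sub 1).fun_pow 2) (pow_ne_zero 2 hv')
  refine this.congr_deriv ?_
  field_simp
  ring

/-- The deceleration parameter `q`. -/
def decel (γ s o : ℝ) : ℝ := -1 + 3 * s ^ 2 + 3 / 2 * γ * o

/-- `μ` stands for `√(3/2) λ`, which equals `3γ/(2v)` when `v = √(3/2) γ/λ`; this is how `λ` is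
eliminated below. -/
def sigmaField (μ γ s o : ℝ) : ℝ := -(2 - decel γ s o) * s + μ * (1 - s ^ 2 - o)

def omegaField (γ s o : ℝ) : ℝ := (2 * (1 + decel γ s o) - 3 * γ) * o

def monotoneFn (v a s o : ℝ) : ℝ := (1 - v * s) ^ 2 * (1 - s ^ 2 - o) ^ (a - 1) * o ^ (-a)

/-- `(γ - 2v²)/(γ(1-v²))` is the exponent `a = 2(λ²-3γ)/(2λ²-3γ²)` with `λ² = 3γ²/(2v²)`. -/
theorem logDeriv_monotoneFn_eq {γ v a s o : ℝ} (hγ : γ ≠ 0) (hv : v ≠ 0) (hv1 : 1 - v ^ 2 ≠ 0)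
    (ha : a = (γ - 2 * v ^ 2) / (γ * (1 - v ^ 2)))
    (hs : 1 - v * s ≠ 0) (hw : 1 - s ^ 2 - o ≠ 0) (ho : o ≠ 0) :
    let s' := sigmaField (3 * γ / (2 * v)) γ s o
    let o' := omegaField γ s o
    2 * -(v * s') / (1 - v * s) + (a - 1) * (-(2 * s * s') - o') / (1 - s ^ 2 - o) + -a * o' / o
      = -(3 * (2 - γ) / (1 - v ^ 2)) * (s - v) ^ 2 / (1 - v * s) := by
  intro s' o'
  simp only [ha, s', o', sigmaField, omegaField, decel]
  field_simp
  ring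

theorem hasDerivAt_monotoneFn {γ v a : ℝ} {S O : ℝ → ℝ} {x : ℝ} (hγ : γ ≠ 0) (hv : v ≠ 0)
    (hv1 : 1 - v ^ 2 ≠ 0) (ha : a = (γ - 2 * v ^ 2) / (γ * (1 - v ^ 2)))
    (hS : HasDerivAt S (sigmaField (3 * γ / (2 * v)) γ (S x) (O x)) x)
    (hO : HasDerivAt O (omegaField γ (S x) (O x)) x)
    (hs : 1 - v * S x ≠ 0) (hw : 1 - S x ^ 2 - O x ≠ 0) (ho : O x ≠ 0) :
    HasDerivAt (fun y => monotoneFn v a (S y) (O y))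
      (-(3 * (2 - γ) / (1 - v ^ 2)) * (S x - v) ^ 2 / (1 - v * S x)
        * monotoneFn v a (S x) (O x)) x := by
  have hP := (hS.const_mul v).const_sub 1
  have hW := ((hS.fun_pow 2).const_sub 1).fun_sub hO
  have := hasDerivAt_sq_mul_rpow_mul_rpow (p := a - 1) (q := -a) hP hW hO hs hw ho
  refine this.congr_deriv ?_
  rw [← logDeriv_monotoneFn_eq hγ hv hv1 ha hs hw ho]
  simp only [monotoneFn]
  push_cast
  ring

theorem sigmaField_at_v {γ v o : ℝ} (hv : v ≠ 0) :
    sigmaField (3 * γ / (2 * v)) γ v o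
      = -(3 / (2 * v)) * (1 - v ^ 2) * (2 * v ^ 2 - γ * (1 - o)) := by
  simp only [sigmaField, decel]
  field_simp
  ring

theorem iterate_deriv_three_monotoneFn {γ v a : ℝ} {S O : ℝ → ℝ} {N : ℝ} (hγ : γ ≠ 0)
    (hv : v ≠ 0) (ha : a = (γ - 2 * v ^ 2) / (γ * (1 - v ^ 2)))
    (hS : ∀ x, HasDerivAt S (sigmaField (3 * γ / (2 * v)) γ (S x) (O x)) x)
    (hO : ∀ x, HasDerivAt O (omegaField γ (S x) (O x)) x)
    (hSv : S N = v) (hw : 0 < 1 - S N ^ 2 - O N) (ho : 0 < O N) :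
    deriv^[3] (fun x => monotoneFn v a (S x) (O x)) N
      = -(27 * (2 - γ) * (2 * v ^ 2 - γ * (1 - O N)) ^ 2 * monotoneFn v a (S N) (O N))
        / (2 * v ^ 2) := by
  have hv1 : 0 < 1 - v ^ 2 := by rw [hSv] at hw; linarith
  have hSc := (hS N).continuousAt
  have hOc := (hO N).continuousAt
  have hPN : 1 - v * S N ≠ 0 := by rw [hSv]; nlinarith
  have hP : ∀ᶠ x in 𝓝 N, 1 - v * S x ≠ 0 := ContinuousAt.eventually_ne (by fun_prop) hPN
  have hW : ∀ᶠ x in 𝓝 N, 1 - S x ^ 2 - O x ≠ 0 := ContinuousAt.eventually_ne (by fun_prop) hw.ne'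
  have hnear := hP.and (hW.and (hOc.eventually_ne ho.ne'))
  set k := -(3 * (2 - γ) / (1 - v ^ 2))
  set s' := fun x => sigmaField (3 * γ / (2 * v)) γ (S x) (O x)
  set φ' := fun s => k * (s - v) * (2 - v * s - v ^ 2) / (1 - v * s) ^ 2
  have hM : ∀ᶠ x in 𝓝 N, HasDerivAt (fun y => monotoneFn v a (S y) (O y))
      (k * (S x - v) ^ 2 / (1 - v * S x) * monotoneFn v a (S x) (O x)) x :=
    hnear.mono fun x hx => hasDerivAt_monotoneFn hγ hv hv1.ne' ha (hS x) (hO x) hx.1 hx.2.1 hx.2.2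
  have hF : ∀ᶠ x in 𝓝 N,
      HasDerivAt (fun y => k * (S y - v) ^ 2 / (1 - v * S y)) (φ' (S x) * s' x) x :=
    hnear.mono fun x hx => (hasDerivAt_mul_sq_sub_div k v (S x) hx.1).comp x (hS x)
  have hs' : DifferentiableAt ℝ s' N := by
    have := (hS N).differentiableAt; have := (hO N).differentiableAt
    simp only [s', sigmaField, decel]; fun_prop
  have hF' : HasDerivAt (fun x => φ' (S x) * s' x) (2 * k / (1 - v ^ 2) * s' N ^ 2) N :=
    hasDerivAt_comp_mul_of_eq_zero (by rw [hSv]; exact hasDerivAt_mul_sub_mul_div k v hv1.ne')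
      (by simp [φ', hSv]) (hS N) hs'
  rw [iterate_deriv_three_eq_of_hasDerivAt_mul hM hF hF' (by simp [hSv]) (by simp [φ', hSv])]
  simp only [s', hSv, sigmaField_at_v hv, k]
  field_simp
  ring

theorem monotoneFn_pos {v a s o : ℝ} (hs : 1 - v * s ≠ 0) (hw : 0 < 1 - s ^ 2 - o) (ho : 0 < o) :
    0 < monotoneFn v a s o :=
  mul_pos (mul_pos (sq_pos_of_ne_zero hs) (Real.rpow_pos_of_pos hw _)) (Real.rpow_pos_of_pos ho _)

end

theorem stmt_11 (lam gam v a : ℝ) (hl : 0 < lam) (hg : 0 < gam) (hg2 : gam < 2)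
    (hv : v = Real.sqrt (3 / 2) * (gam / lam))
    (ha : a = 2 * (lam ^ 2 - 3 * gam) / (2 * lam ^ 2 - 3 * gam ^ 2))
    (S O : ℝ → ℝ)
    (hS : ∀ N, HasDerivAt S (-(2 - (-1 + 3 * S N ^ 2 + 3 / 2 * gam * O N)) * S N
        + Real.sqrt (3 / 2) * lam * (1 - S N ^ 2 - O N)) N)
    (hO : ∀ N, HasDerivAt O
        ((2 * (1 + (-1 + 3 * S N ^ 2 + 3 / 2 * gam * O N)) - 3 * gam) * O N) N)
    (N : ℝ) (hint : S N ^ 2 + O N < 1) (hOp : 0 < O N) (hSv : S N = v) :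
    deriv^[3] (fun N => (1 - v * S N) ^ 2 * (1 - S N ^ 2 - O N) ^ (a - 1) * O N ^ (-a)) N
        = -(27 * (2 - gam) * (2 * v ^ 2 - gam * (1 - O N)) ^ 2
            * ((1 - v * S N) ^ 2 * (1 - S N ^ 2 - O N) ^ (a - 1) * O N ^ (-a)))
          / (2 * v ^ 2) ∧
      deriv^[3] (fun N => (1 - v * S N) ^ 2 * (1 - S N ^ 2 - O N) ^ (a - 1) * O N ^ (-a)) N
        ≤ 0 ∧
      (deriv^[3] (fun N => (1 - v * S N) ^ 2 * (1 - S N ^ 2 - O N) ^ (a - 1) * O N ^ (-a)) N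
          = 0 ↔ O N = 1 - 3 * gam / lam ^ 2) := by
  have hv0 : 0 < v := by rw [hv]; positivity
  have hsqrt : Real.sqrt (3 / 2) ^ 2 = 3 / 2 := Real.sq_sqrt (by norm_num)
  have hrel : 2 * v ^ 2 * lam ^ 2 = 3 * gam ^ 2 := by
    rw [hv, mul_pow, div_pow, hsqrt]; field_simp
  have hμ : Real.sqrt (3 / 2) * lam = 3 * gam / (2 * v) := by
    rw [eq_div_iff (by positivity), hv]; field_simp; linear_combination 2 * hsqrt
  have hv1 : 0 < 1 - v ^ 2 := by rw [← hSv]; nlinarith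
  have ha' : a = (gam - 2 * v ^ 2) / (gam * (1 - v ^ 2)) := by
    rw [ha, div_eq_div_iff (by nlinarith [mul_pos (pow_pos hl 2) hv1]) (by positivity)]
    linear_combination (2 - gam) * hrel
  have hM3 := iterate_deriv_three_monotoneFn hg.ne' hv0.ne' ha'
    (fun x => by rw [← hμ]; exact hS x) hO hSv (by linarith) hOp
  have hM := monotoneFn_pos (a := a) (s := S N) (by rw [hSv]; nlinarith) (by linarith) hOp
  have hX : 2 * v ^ 2 - gam * (1 - O N) = gam * (O N - (1 - 3 * gam / lam ^ 2)) := by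
    field_simp; linear_combination hrel
  unfold monotoneFn at hM3 hM
  refine ⟨hM3, ?_, ?_⟩
  · rw [hM3]
    exact div_nonpos_of_nonpos_of_nonneg (neg_nonpos.2 (by positivity)) (by positivity)
  · have h2g : 2 - gam ≠ 0 := by linarith
    rw [hM3, hX]
    simp [hg.ne', hM.ne', hv0.ne', h2g, sub_eq_zero]
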